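/- arXiv:1508.01813 — 2 statements merged into one kernel-verified Lean document; each statement's English description precedes it below -/
import Mathlib

section
/- For S ⊆ T with μ(S) = 0 (no cluster entirely contained in S), the lifted generalized subtour elimination inequality x(δ(S)) ≥ 2·y_i, for i ∈ S, is valid for the GMDTSP polytope, and the lifting coefficient is exact: there exists a feasible GMDTSP solution with y_i = 0 and x(δ(S)) = 0, namely a solution visiting no target of S, which exists precisely because every cluster has a representative outside S. -/
open Finset

/-- A feasible GMDTSP solution: a collection of simple cycles on the complete
target–depot graph (no depot–depot edges), each cycle containing exactly one
depot, visiting at least one target of every cluster.  `x u v` is the number of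
times the edge `{u,v}` is used (2 only on degenerate depot–target two-edge
cycles) and `y t` indicates whether target `t` is visited. -/
structure GMDTSPSol (T D : Type*) [Fintype T] [Fintype D]
    (clusters : Finset (Finset T)) where
  x : (T ⊕ D) → (T ⊕ D) → ℕ
  y : T → ℕ
  symm : ∀ u v, x u v = x v u
  loopless : ∀ u, x u u = 0
  no_depot_depot : ∀ d d' : D, x (Sum.inr d) (Sum.inr d') = 0
  xTT_le_one : ∀ t t' : T, x (Sum.inl t) (Sum.inl t') ≤ 1
  xDT_le_two : ∀ (d : D) (t : T), x (Sum.inr d) (Sum.inl t) ≤ 2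
  y_le_one : ∀ t, y t ≤ 1
  degree : ∀ t : T, ∑ v : T ⊕ D, x (Sum.inl t) v = 2 * y t
  depot_degree : ∀ d : D, ∑ v : T ⊕ D, x (Sum.inr d) v ≤ 2
  connected : ∀ t : T, y t = 1 →
    ∃ d : D, Relation.ReflTransGen (fun u v => 0 < x u v) (Sum.inl t) (Sum.inr d)
  one_depot_per_cycle : ∀ d d' : D, d ≠ d' →
    ¬ Relation.ReflTransGen (fun u v => 0 < x u v) (Sum.inr d) (Sum.inr d')
  covers : ∀ C ∈ clusters, ∃ t ∈ C, y t = 1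

/-- `x(δ(S))`: total multiplicity of solution edges crossing the cut `(S, V∖S)`,
for a set `S` of targets. -/
def cutS {T D : Type*} [Fintype T] [DecidableEq T] [Fintype D]
    {clusters : Finset (Finset T)} (sol : GMDTSPSol T D clusters)
    (S : Finset T) : ℕ :=
  ∑ a ∈ S, ((∑ b ∈ Sᶜ, sol.x (Sum.inl a) (Sum.inl b)) +
    ∑ d : D, sol.x (Sum.inl a) (Sum.inr d))


/-!
Summing the degree equations over `S` gives `2 ∑_{a ∈ S} y a = 2 x(E(S)) + x(δ(S))`, so the cut
value is even. If `y i = 1`, the path from `i` to its depot has to leave `S`, so the cut value is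
positive, hence at least `2`.

For exactness, pick in every cluster a target outside `S` (possible since `μ(S) = 0`) and join these
representatives and one depot into a single cycle: it is feasible and never touches `S`.
-/

lemma even_sum_sum_of_symm {α : Type*} [DecidableEq α] (f : α → α → ℕ)
    (hf : ∀ a b, f a b = f b a) (hf₀ : ∀ a, f a a = 0) (s : Finset α) :
    Even (∑ a ∈ s, ∑ b ∈ s, f a b) := by
  induction s using Finset.induction_on with
  | empty => simp
  | insert c s hc ih =>
    have hrow : ∑ a ∈ s, f a c = ∑ b ∈ s, f c b := sum_congr rfl fun a _ => hf a c
    simp only [sum_insert hc, hf₀, zero_add, sum_add_distrib, hrow]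
    rw [← add_assoc, ← two_mul]
    exact (even_two_mul _).add ih

section CycleMultigraph

variable {V : Type*} [DecidableEq V] {n : ℕ}

lemma finRotate_ne_self (hn : 2 ≤ n) (j : Fin n) : finRotate n j ≠ j :=
  Equiv.Perm.mem_support.1 (support_finRotate_of_le hn ▸ mem_univ j)

lemma eq_zero_or_finRotate_eq_zero_of_finRotate_finRotate {m : ℕ} {j : Fin (m + 1)}
    (h : finRotate (m + 1) (finRotate (m + 1) j) = j) : j = 0 ∨ finRotate (m + 1) j = 0 := by
  have h₁ := coe_finRotate j
  have h₂ := coe_finRotate (finRotate (m + 1) j)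
  rw [h] at h₂
  have := j.isLt
  simp only [Nat.succ_eq_add_one, Fin.ext_iff, Fin.val_last, Fin.val_zero] at h₁ h₂ ⊢
  split_ifs at h₁ h₂ <;> omega

/-- Multiplicity of the edge `{u, w}` in the closed walk `v 0, v 1, …, v (n - 1), v 0`; for
`n = 2` its single edge is counted twice. -/
def cycleMult (v : Fin n → V) (u w : V) : ℕ :=
  #{j | v j = u ∧ v (finRotate n j) = w} + #{j | v j = w ∧ v (finRotate n j) = u}

variable {v : Fin n → V}

lemma cycleMult_comm (u w : V) : cycleMult v u w = cycleMult v w u :=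
  add_comm _ _

lemma cycleMult_eq_zero_of_notMem_range {u : V} (hu : u ∉ Set.range v) (w : V) :
    cycleMult v u w = 0 := by
  simp only [Set.mem_range, not_exists] at hu
  simp [cycleMult, hu]

lemma mem_range_of_cycleMult_pos {u w : V} (h : 0 < cycleMult v u w) : u ∈ Set.range v := by
  by_contra hu
  simp [cycleMult_eq_zero_of_notMem_range hu] at h

lemma card_fiber_eq_of_injective (hv : v.Injective) (u : V) :
    #{j | v j = u} = if u ∈ Set.range v then 1 else 0 := by
  split_ifs with hu
  · obtain ⟨j, rfl⟩ := hu
    simp [hv.eq_iff, filter_eq']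
  · simpa using hu

lemma card_fiber_le_one (hv : v.Injective) (u : V) : #{j | v j = u} ≤ 1 := by
  rw [card_fiber_eq_of_injective hv]
  split_ifs <;> simp

lemma card_arcs_le_one (hv : v.Injective) (u w : V) :
    #{j | v j = u ∧ v (finRotate n j) = w} ≤ 1 :=
  (card_le_card fun j => by simp +contextual).trans (card_fiber_le_one hv u)

lemma cycleMult_le_two (hv : v.Injective) (u w : V) : cycleMult v u w ≤ 2 :=
  add_le_add (card_arcs_le_one hv u w) (card_arcs_le_one hv w u)

lemma cycleMult_self (hv : v.Injective) (hn : 2 ≤ n) (u : V) : cycleMult v u u = 0 := by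
  have hrot (j : Fin n) : v (finRotate n j) ≠ v j := hv.ne (finRotate_ne_self hn j)
  simp only [cycleMult, add_eq_zero, card_eq_zero, filter_eq_empty_iff]
  exact ⟨fun j _ h => hrot j (h.2.trans h.1.symm), fun j _ h => hrot j (h.2.trans h.1.symm)⟩

/-- Only a walk of length two traverses an edge in both directions, and it passes through `v 0`. -/
lemma cycleMult_le_one {v : Fin (n + 1) → V} (hv : v.Injective) {u w : V} (hu : u ≠ v 0)
    (hw : w ≠ v 0) : cycleMult v u w ≤ 1 := by
  have h₁ := card_arcs_le_one hv u w
  have h₂ := card_arcs_le_one hv w u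
  by_contra! h
  unfold cycleMult at h
  obtain ⟨j, hj⟩ := card_pos.1 (show 0 < #{j | v j = u ∧ v (finRotate _ j) = w} by omega)
  obtain ⟨j', hj'⟩ := card_pos.1 (show 0 < #{j | v j = w ∧ v (finRotate _ j) = u} by omega)
  simp only [mem_filter, mem_univ, true_and] at hj hj'
  have hj'_eq : finRotate _ j = j' := hv (hj.2.trans hj'.1.symm)
  have hrot : finRotate _ (finRotate _ j) = j := hv (by rw [hj'_eq, hj'.2, hj.1])
  rcases eq_zero_or_finRotate_eq_zero_of_finRotate_finRotate hrot with h0 | h0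
  · exact hu (h0 ▸ hj.1.symm)
  · exact hw (h0 ▸ hj.2.symm)

lemma sum_cycleMult [Fintype V] (u : V) : ∑ w, cycleMult v u w = 2 * #{j | v j = u} := by
  have hout : ∑ w, #{j | v j = u ∧ v (finRotate n j) = w} = #{j | v j = u} := by
    rw [card_eq_sum_card_fiberwise (f := fun j => v (finRotate n j)) (t := univ)
      fun _ _ => mem_univ _]
    simp only [filter_filter]
  have hin : ∑ w, #{j | v j = w ∧ v (finRotate n j) = u} = #{j | v j = u} := by
    have hrot : #{j | v (finRotate n j) = u} = #{j | v j = u} := by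
      simp only [card_filter]
      exact Equiv.sum_comp (finRotate n) fun j => if v j = u then 1 else 0
    rw [← hrot, card_eq_sum_card_fiberwise (f := v) (t := univ) fun _ _ => mem_univ _]
    simp only [filter_filter, and_comm]
  simp only [cycleMult, sum_add_distrib, hout, hin]
  ring

lemma cycleMult_pos_finRotate (j : Fin n) : 0 < cycleMult v (v j) (v (finRotate n j)) :=
  Nat.add_pos_left (card_pos.2 ⟨j, by simp⟩) _

lemma reflTransGen_cycleMult (hn : 2 ≤ n) (i j : Fin n) :
    Relation.ReflTransGen (fun a b => 0 < cycleMult v a b) (v i) (v j) := by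
  have hpow (m : ℕ) :
      Relation.ReflTransGen (fun a b => 0 < cycleMult v a b) (v i) (v ((finRotate n ^ m) i)) := by
    induction m with
    | zero => rfl
    | succ m ih =>
      rw [pow_succ', Equiv.Perm.mul_apply]
      exact ih.tail (cycleMult_pos_finRotate _)
  obtain ⟨m, rfl⟩ := (isCycle_finRotate_of_le hn).exists_pow_eq (finRotate_ne_self hn i)
    (finRotate_ne_self hn j)
  exact hpow m

lemma mem_range_of_reflTransGen_cycleMult {a b : V}
    (h : Relation.ReflTransGen (fun a b => 0 < cycleMult v a b) a b) (hab : a ≠ b) :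
    a ∈ Set.range v ∧ b ∈ Set.range v := by
  obtain rfl | ⟨c, hac, -⟩ := h.cases_head
  · exact absurd rfl hab
  obtain rfl | ⟨c', -, hcb⟩ := h.cases_tail
  · exact absurd rfl hab
  rw [cycleMult_comm] at hcb
  exact ⟨mem_range_of_cycleMult_pos hac, mem_range_of_cycleMult_pos hcb⟩

end CycleMultigraph

section Tour

variable {T D : Type*}

noncomputable def tourVertex (d : D) (R : Finset T) : Fin (#R + 1) → T ⊕ D :=
  Fin.cons (Sum.inr d) fun j => Sum.inl (R.equivFin.symm j)

variable {d : D} {R : Finset T}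

lemma tourVertex_injective : (tourVertex d R).Injective :=
  Fin.cons_injective_iff.2 ⟨by simp, Sum.inl_injective.comp (Subtype.val_injective.comp
    R.equivFin.symm.injective)⟩

@[simp]
lemma tourVertex_zero : tourVertex d R 0 = Sum.inr d := rfl

@[simp]
lemma inl_mem_range_tourVertex {t : T} : Sum.inl t ∈ Set.range (tourVertex d R) ↔ t ∈ R := by
  simp only [tourVertex, Fin.range_cons, Set.mem_insert_iff, reduceCtorEq, false_or,
    Set.mem_range, Sum.inl.injEq]
  exact ⟨fun ⟨j, hj⟩ => hj ▸ (R.equivFin.symm j).2, fun ht => ⟨R.equivFin ⟨t, ht⟩, by simp⟩⟩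

@[simp]
lemma inr_mem_range_tourVertex {d' : D} :
    Sum.inr d' ∈ Set.range (tourVertex d R) ↔ d' = d := by
  simp [tourVertex, eq_comm]

noncomputable def tour [Fintype T] [DecidableEq T] [Fintype D] [DecidableEq D]
    {clusters : Finset (Finset T)} (d : D) (R : Finset T) (hR : R.Nonempty)
    (hcov : ∀ C ∈ clusters, ∃ t ∈ C, t ∈ R) : GMDTSPSol T D clusters where
  x := cycleMult (tourVertex d R)
  y t := if t ∈ R then 1 else 0
  symm := cycleMult_comm
  loopless := cycleMult_self tourVertex_injective (Nat.succ_le_succ hR.card_pos)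
  no_depot_depot d₁ d₂ := by
    by_contra h
    have h₁ := mem_range_of_cycleMult_pos (Nat.pos_of_ne_zero h)
    rw [cycleMult_comm] at h
    have h₂ := mem_range_of_cycleMult_pos (Nat.pos_of_ne_zero h)
    simp only [inr_mem_range_tourVertex] at h₁ h₂
    subst h₁ h₂
    exact h (cycleMult_self tourVertex_injective (Nat.succ_le_succ hR.card_pos) _)
  xTT_le_one _ _ := cycleMult_le_one tourVertex_injective (by simp) (by simp)
  xDT_le_two _ _ := cycleMult_le_two tourVertex_injective _ _
  y_le_one t := by split_ifs <;> simp
  degree t := by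
    rw [sum_cycleMult, card_fiber_eq_of_injective tourVertex_injective]
    simp only [inl_mem_range_tourVertex]
  depot_degree d' := by
    have := card_fiber_le_one (tourVertex_injective (d := d) (R := R)) (Sum.inr d')
    rw [sum_cycleMult]
    omega
  connected t ht := by
    obtain ⟨j, hj⟩ := inl_mem_range_tourVertex.2 (by simpa using ht)
    exact ⟨d, hj ▸ reflTransGen_cycleMult (Nat.succ_le_succ hR.card_pos) j 0⟩
  one_depot_per_cycle d₁ d₂ hne h := by
    have := mem_range_of_reflTransGen_cycleMult h (by simpa using hne)
    simp only [inr_mem_range_tourVertex] at this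
    exact hne (this.1.trans this.2.symm)
  covers C hC := by
    obtain ⟨t, htC, htR⟩ := hcov C hC
    exact ⟨t, htC, if_pos htR⟩

end Tour

namespace GMDTSPSol

variable {T D : Type*} [Fintype T] [DecidableEq T] [Fintype D] {clusters : Finset (Finset T)}
  (sol : GMDTSPSol T D clusters) (S : Finset T)

lemma two_mul_sum_y_eq :
    2 * ∑ a ∈ S, sol.y a = ∑ a ∈ S, ∑ b ∈ S, sol.x (.inl a) (.inl b) + cutS sol S := by
  rw [mul_sum, cutS, ← sum_add_distrib]
  refine sum_congr rfl fun a _ => ?_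
  rw [← sol.degree, Fintype.sum_sum_type, ← sum_add_sum_compl S]
  ring

lemma even_cutS : Even (cutS sol S) := by
  have h := sol.two_mul_sum_y_eq S ▸ even_two_mul (∑ a ∈ S, sol.y a)
  exact (Nat.even_add.1 h).1 <| even_sum_sum_of_symm _ (fun _ _ => sol.symm _ _)
    (fun _ => sol.loopless _) S

variable {sol S}

lemma exists_eq_inl_of_reflTransGen_of_cutS_eq_zero (hcut : cutS sol S = 0) {a : T} (ha : a ∈ S)
    {w : T ⊕ D} (h : Relation.ReflTransGen (fun u v => 0 < sol.x u v) (.inl a) w) :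
    ∃ b ∈ S, w = .inl b := by
  have hx : ∀ a ∈ S,
      (∀ b ∈ Sᶜ, sol.x (.inl a) (.inl b) = 0) ∧ ∀ d, sol.x (.inl a) (.inr d) = 0 := by
    simpa [cutS, sum_eq_zero_iff] using hcut
  induction h with
  | refl => exact ⟨a, ha, rfl⟩
  | @tail _ w _ hstep ih =>
    obtain ⟨b, hb, rfl⟩ := ih
    rcases w with t | d
    · by_cases htS : t ∈ S
      · exact ⟨t, htS, rfl⟩
      · simp [(hx b hb).1 t (mem_compl.2 htS)] at hstep
    · simp [(hx b hb).2 d] at hstep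

lemma cutS_pos_of_y_eq_one {i : T} (hi : i ∈ S) (hy : sol.y i = 1) : 0 < cutS sol S := by
  refine Nat.pos_of_ne_zero fun hcut => ?_
  obtain ⟨d, hd⟩ := sol.connected i hy
  obtain ⟨_, _, h⟩ := exists_eq_inl_of_reflTransGen_of_cutS_eq_zero hcut hi hd
  exact Sum.inr_ne_inl h

lemma two_mul_y_le_cutS {i : T} (hi : i ∈ S) : 2 * sol.y i ≤ cutS sol S := by
  obtain h0 | hpos := Nat.eq_zero_or_pos (sol.y i)
  · simp [h0]
  have hy : sol.y i = 1 := le_antisymm (sol.y_le_one i) hpos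
  obtain ⟨k, hk⟩ := sol.even_cutS S
  have := cutS_pos_of_y_eq_one hi hy
  omega

lemma cutS_eq_zero_of_forall_x_eq_zero (h : ∀ a ∈ S, ∀ w, sol.x (.inl a) w = 0) :
    cutS sol S = 0 :=
  sum_eq_zero fun a ha => by simp [h a ha]

end GMDTSPSol

theorem gsec_lifting_exact_general {T D : Type*} [Fintype T] [DecidableEq T]
    [Fintype D] [Nonempty D] (clusters : Finset (Finset T))
    (hcover : ∀ t : T, ∃ C ∈ clusters, t ∈ C)
    (S : Finset T) (i : T) (hi : i ∈ S)
    (hmu : ∀ C ∈ clusters, ¬ C ⊆ S) :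
    (∀ sol : GMDTSPSol T D clusters, 2 * sol.y i ≤ cutS sol S) ∧
      ∃ sol : GMDTSPSol T D clusters,
        sol.y i = 0 ∧ cutS sol S = 0 ∧ ∀ t ∈ S, sol.y t = 0 := by
  classical
  refine ⟨fun sol => sol.two_mul_y_le_cutS hi, ?_⟩
  have hrep : ∀ C ∈ clusters, ∃ t ∈ C, t ∉ S := fun C hC => not_subset.1 (hmu C hC)
  have : Nonempty T := ⟨i⟩
  choose! rep hrepC hrepS using hrep
  set R := clusters.image rep
  have hRS : ∀ t ∈ S, t ∉ R := by
    rintro t ht htR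
    obtain ⟨C, hC, rfl⟩ := mem_image.1 htR
    exact hrepS C hC ht
  obtain ⟨C₀, hC₀, -⟩ := hcover i
  let sol : GMDTSPSol T D clusters := tour (Classical.arbitrary D) R
    ⟨rep C₀, mem_image_of_mem rep hC₀⟩ fun C hC => ⟨rep C, hrepC C hC, mem_image_of_mem rep hC⟩
  have hy : ∀ t ∈ S, sol.y t = 0 := fun t ht => if_neg (hRS t ht)
  refine ⟨sol, hy i hi, GMDTSPSol.cutS_eq_zero_of_forall_x_eq_zero fun a ha => ?_, hy⟩
  exact cycleMult_eq_zero_of_notMem_range (inl_mem_range_tourVertex.not.2 (hRS a ha))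

/-- For `S ⊆ T` with `μ(S) = 0` (no cluster entirely
contained in `S`) and `i ∈ S`, the lifted GSEC `x(δ(S)) ≥ 2·y_i` is valid for
every feasible GMDTSP solution, and the lifting coefficient is exact: there is
a feasible solution with `y_i = 0` and `x(δ(S)) = 0`, namely one visiting no
target of `S` (which exists because every cluster has a representative outside
`S`). -/
theorem gsec_lifting_exact {T D : Type*} [Fintype T] [DecidableEq T]
    [Fintype D] [Nonempty D] (clusters : Finset (Finset T))
    (hcover : ∀ t : T, ∃ C ∈ clusters, t ∈ C)
    (hdisj : ∀ C ∈ clusters, ∀ C' ∈ clusters, C ≠ C' → Disjoint C C')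
    (hnonempty : ∀ C ∈ clusters, C.Nonempty)
    (S : Finset T) (i : T) (hi : i ∈ S)
    (hmu : ∀ C ∈ clusters, ¬ C ⊆ S) :
    (∀ sol : GMDTSPSol T D clusters, 2 * sol.y i ≤ cutS sol S) ∧
      ∃ sol : GMDTSPSol T D clusters,
        sol.y i = 0 ∧ cutS sol S = 0 ∧ ∀ t ∈ S, sol.y t = 0 :=
  gsec_lifting_exact_general clusters hcover S i hi hmu
end

section
/- For any depot d and target i, the inequality x_{di} ≤ 2 does not define a facet of the GMDTSP polytope P: the face it induces is strictly contained in a face of codimension ≥ 2 (it forces the degenerate two-edge cycle d–i–d, hence also x_e = 0 for all other edges e incident to i and y_i = 1). -/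
open Finset

noncomputable section

/-- The incidence vector `(x, y)` of a feasible GMDTSP solution, viewed as a
point of `ℝ^{E} × ℝ^{T}` (edge coordinates stored symmetrically). -/
def incVec {T D : Type*} [Fintype T] [Fintype D] {clusters : Finset (Finset T)}
    (sol : GMDTSPSol T D clusters) : ((T ⊕ D) → (T ⊕ D) → ℝ) × (T → ℝ) :=
  (fun u v => (sol.x u v : ℝ), fun t => (sol.y t : ℝ))

/-- `P(F)`: the convex hull of incidence vectors of feasible GMDTSP solutions
satisfying `y_v = 1` for all `v ∈ F`.  The GMDTSP polytope is `P = P(∅)` and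
the MDTSP polytope is `Q = P(T)`. -/
def PF (T D : Type*) [Fintype T] [Fintype D] (clusters : Finset (Finset T))
    (F : Finset T) : Set (((T ⊕ D) → (T ⊕ D) → ℝ) × (T → ℝ)) :=
  convexHull ℝ
    {p | ∃ sol : GMDTSPSol T D clusters, (∀ v ∈ F, sol.y v = 1) ∧ p = incVec sol}

/-- The dimension of a set: the dimension of its affine hull. -/
def dimOf {T D : Type*} [Fintype T] [Fintype D]
    (s : Set (((T ⊕ D) → (T ⊕ D) → ℝ) × (T → ℝ))) : ℕ :=
  Module.finrank ℝ (affineSpan ℝ s).direction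

/-- The inequality `f p ≥ b` is valid for `P` and defines a facet of `P`. -/
def IsFacetGe {T D : Type*} [Fintype T] [Fintype D]
    (f : ((T ⊕ D) → (T ⊕ D) → ℝ) × (T → ℝ) → ℝ) (b : ℝ)
    (P : Set (((T ⊕ D) → (T ⊕ D) → ℝ) × (T → ℝ))) : Prop :=
  (∀ p ∈ P, b ≤ f p) ∧ dimOf {p ∈ P | f p = b} = dimOf P - 1

/-- The inequality `f p ≤ b` is valid for `P` and defines a facet of `P`. -/
def IsFacetLe {T D : Type*} [Fintype T] [Fintype D]
    (f : ((T ⊕ D) → (T ⊕ D) → ℝ) × (T → ℝ) → ℝ) (b : ℝ)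
    (P : Set (((T ⊕ D) → (T ⊕ D) → ℝ) × (T → ℝ))) : Prop :=
  (∀ p ∈ P, f p ≤ b) ∧ dimOf {p ∈ P | f p = b} = dimOf P - 1

/-! On the face `x_{di} = 2` the degree equation `x(δ(i)) = 2 y_i ≤ 2` forces
`x_{ia} = x_{ib} = 0` for any two further targets `a ≠ b`, so the face lies in a fibre of the
linear map `p ↦ (x_{ia}, x_{ib})`. The Hamiltonian tours `d a i b …`, `d i b a …` and
`d i a b …` are mapped to `(1, 1)`, `(0, 1)` and `(1, 0)`, so this map sends the direction of
`P` onto `ℝ²` and the face has codimension at least two. -/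

open Equiv Module

namespace Equiv.Perm

variable {α : Type*} [DecidableEq α]

/-- Edge multiplicities of the cycles of `σ`: a 2-cycle gives a double edge, like the degenerate
depot–target cycles of a GMDTSP solution, and fixed points give no loops. -/
def cycleMult (σ : Perm α) (u v : α) : ℕ :=
  (if σ u = v ∧ u ≠ v then 1 else 0) + (if σ v = u ∧ v ≠ u then 1 else 0)

variable {σ : Perm α}

lemma cycleMult_comm (σ : Perm α) (u v : α) : σ.cycleMult u v = σ.cycleMult v u :=
  add_comm _ _

lemma cycleMult_self (σ : Perm α) (u : α) : σ.cycleMult u u = 0 := by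
  simp [cycleMult]

lemma cycleMult_le_two (σ : Perm α) (u v : α) : σ.cycleMult u v ≤ 2 := by
  unfold cycleMult; split_ifs <;> simp

lemma cycleMult_eq_one {u v : α} (huv : σ u = v) (hne : u ≠ v) (hvu : σ v ≠ u) :
    σ.cycleMult u v = 1 := by
  simp [cycleMult, huv, hne, hvu]

lemma cycleMult_eq_zero {u v : α} (huv : σ u ≠ v) (hvu : σ v ≠ u) :
    σ.cycleMult u v = 0 := by
  simp [cycleMult, huv, hvu]

lemma apply_ne_self_of_cycleMult_pos {u v : α} (h : 0 < σ.cycleMult u v) : σ u ≠ u := by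
  unfold cycleMult at h
  split_ifs at h <;> grind [σ.injective.eq_iff]

section Fintype

variable [Fintype α]

lemma mem_support_of_cycleMult_pos {u v : α} (h : 0 < σ.cycleMult u v) :
    u ∈ σ.support ∧ v ∈ σ.support :=
  ⟨mem_support.2 (apply_ne_self_of_cycleMult_pos h),
    mem_support.2 (apply_ne_self_of_cycleMult_pos (σ.cycleMult_comm u v ▸ h))⟩

lemma sum_cycleMult (σ : Perm α) (u : α) :
    ∑ v, σ.cycleMult u v = if u ∈ σ.support then 2 else 0 := by
  have hout : ∑ v, (if σ u = v ∧ u ≠ v then 1 else 0) = if σ u ≠ u then 1 else 0 := by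
    simp [ite_and, eq_comm]
  have hin : ∑ v, (if σ v = u ∧ v ≠ u then 1 else 0) = if σ u ≠ u then 1 else 0 := by
    rw [sum_eq_single (σ.symm u) (fun v _ hv ↦ by simp [← eq_symm_apply, hv]) (by simp)]
    simp only [ne_eq, true_and, symm_apply_eq, apply_symm_apply, eq_comm (a := u)]
  simp only [cycleMult, sum_add_distrib, hout, hin, mem_support]
  split_ifs <;> rfl

lemma IsCycle.cycleMult_le_one (hσ : σ.IsCycle) (h3 : 3 ≤ #σ.support) (u v : α) :
    σ.cycleMult u v ≤ 1 := by
  unfold cycleMult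
  split_ifs with huv hvu <;> try simp
  obtain ⟨rfl, hne⟩ := huv
  have hsq : σ ^ 2 = 1 := (hσ.pow_eq_one_iff' (Ne.symm hne)).2 (by simp [sq, hvu.1])
  have := orderOf_le_of_pow_eq_one two_pos hsq
  rw [hσ.orderOf] at this
  omega

lemma reflTransGen_cycleMult_pow {u : α} (hu : u ∈ σ.support) (n : ℕ) :
    Relation.ReflTransGen (fun a b ↦ 0 < σ.cycleMult a b) u ((σ ^ n) u) := by
  induction n with
  | zero => rfl
  | succ n ih =>
    refine ih.tail ?_
    have hmoved : σ ((σ ^ n) u) ≠ (σ ^ n) u := mem_support.1 (pow_apply_mem_support.2 hu)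
    rw [pow_succ', mul_apply, cycleMult]
    simp [Ne.symm hmoved]

lemma IsCycle.reflTransGen_cycleMult (hσ : σ.IsCycle) {u v : α} (hu : u ∈ σ.support)
    (hv : v ∈ σ.support) : Relation.ReflTransGen (fun a b ↦ 0 < σ.cycleMult a b) u v := by
  obtain ⟨n, rfl⟩ := (hσ.sameCycle (mem_support.1 hu) (mem_support.1 hv)).exists_nat_pow_eq
  exact reflTransGen_cycleMult_pow hu n

lemma exists_isCycle_support_eq_of_mem {s : Finset α} {a b c d : α}
    (ha : a ∈ s) (hb : b ∈ s) (hc : c ∈ s) (hd : d ∈ s) (hab : a ≠ b) (hac : a ≠ c)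
    (had : a ≠ d) (hbc : b ≠ c) (hbd : b ≠ d) (hcd : c ≠ d) :
    ∃ σ : Perm α, σ.IsCycle ∧ σ.support = s ∧ σ a = b ∧ σ b = c ∧ σ c = d := by
  set l := a :: b :: c :: d :: (s \ {a, b, c, d}).toList
  have hl : l.Nodup := by
    simp [l, List.nodup_cons, hab, hac, had, hbc, hbd, hcd, Finset.nodup_toList]
  refine ⟨l.formPerm, List.isCycle_formPerm hl (by simp [l]), ?_,
    List.formPerm_apply_lt_getElem l hl 0 (by simp [l]),
    List.formPerm_apply_lt_getElem l hl 1 (by simp [l]),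
    List.formPerm_apply_lt_getElem l hl 2 (by simp [l])⟩
  rw [List.support_formPerm_of_nodup l hl (by simp [l])]
  ext x
  simp [l]
  grind

end Fintype

end Equiv.Perm

namespace GMDTSPSol

variable {T D : Type*} [Fintype T] [Fintype D] {clusters : Finset (Finset T)}

lemma x_add_x_le_two (sol : GMDTSPSol T D clusters) (i : T) {u v : T ⊕ D}
    (huv : u ≠ v) : sol.x (.inl i) u + sol.x (.inl i) v ≤ 2 := by
  classical
  have hsub := sum_le_sum_of_subset (f := sol.x (.inl i)) (subset_univ {u, v})
  rw [sum_pair huv] at hsub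
  have := sol.degree i
  have := sol.y_le_one i
  omega

def ofCycle [DecidableEq T] [DecidableEq D] (σ : Perm (T ⊕ D)) (d : D) (hσ : σ.IsCycle)
    (h3 : 3 ≤ #σ.support) (hdepot : ∀ e, Sum.inr e ∈ σ.support ↔ e = d)
    (hcov : ∀ C ∈ clusters, ∃ t ∈ C, Sum.inl t ∈ σ.support) :
    GMDTSPSol T D clusters where
  x := σ.cycleMult
  y t := if Sum.inl t ∈ σ.support then 1 else 0
  symm := σ.cycleMult_comm
  loopless := σ.cycleMult_self
  no_depot_depot e e' := by
    by_contra h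
    obtain ⟨he, he'⟩ := Perm.mem_support_of_cycleMult_pos (Nat.pos_of_ne_zero h)
    rw [(hdepot e).1 he, (hdepot e').1 he', Perm.cycleMult_self] at h
    exact h rfl
  xTT_le_one _ _ := hσ.cycleMult_le_one h3 _ _
  xDT_le_two _ _ := σ.cycleMult_le_two _ _
  y_le_one _ := by split_ifs <;> simp
  degree t := by rw [Perm.sum_cycleMult]; split_ifs <;> rfl
  depot_degree e := (Perm.sum_cycleMult σ _).trans_le (by split_ifs <;> simp)
  connected t ht := ⟨d, hσ.reflTransGen_cycleMult (by simpa using ht) ((hdepot d).2 rfl)⟩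
  one_depot_per_cycle e e' hne h := by
    rcases h.cases_head with h | ⟨_, hstart, -⟩
    · exact hne (Sum.inr_injective h)
    rcases h.cases_tail with h | ⟨_, -, hend⟩
    · exact hne (Sum.inr_injective h.symm)
    exact hne (((hdepot e).1 (Perm.mem_support_of_cycleMult_pos hstart).1).trans
      ((hdepot e').1 (Perm.mem_support_of_cycleMult_pos hend).2).symm)
  covers C hC := by
    obtain ⟨t, ht, hts⟩ := hcov C hC
    exact ⟨t, ht, if_pos hts⟩

lemma exists_tour_with_path (hnonempty : ∀ C ∈ clusters, C.Nonempty) (d : D)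
    {p q r : T} (hpq : p ≠ q) (hpr : p ≠ r) (hqr : q ≠ r) :
    ∃ sol : GMDTSPSol T D clusters, sol.x (.inl p) (.inl q) = 1 ∧
      sol.x (.inl q) (.inl r) = 1 ∧ sol.x (.inl p) (.inl r) = 0 := by
  classical
  obtain ⟨σ, hσ, hsupp, hd, hp, hq⟩ :=
    Perm.exists_isCycle_support_eq_of_mem (s := insert (Sum.inr d) (univ.map .inl))
      (a := Sum.inr d) (b := Sum.inl p) (c := Sum.inl q) (d := Sum.inl r)
      (by simp) (by simp) (by simp) (by simp) (by simp) (by simp) (by simp)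
      (by simpa using hpq) (by simpa using hpr) (by simpa using hqr)
  refine ⟨ofCycle σ d hσ ?_ (by simp [hsupp]) (by simp [hsupp]; exact hnonempty),
    ?_, ?_, ?_⟩
  · exact two_lt_card.2 ⟨_, hsupp ▸ mem_insert_self _ _, .inl p, by simp [hsupp],
      .inl q, by simp [hsupp], by simp, by simp, by simpa using hpq⟩
  · exact Perm.cycleMult_eq_one hp (by simpa using hpq) (by simpa [hq] using hpr.symm)
  · exact Perm.cycleMult_eq_one hq (by simpa using hqr)
      (hp ▸ σ.injective.ne (by simpa using hpr.symm))
  · exact Perm.cycleMult_eq_zero (by simpa [hp] using hqr)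
      (hd ▸ σ.injective.ne (by simp))

end GMDTSPSol

section Polytope

variable {T D : Type*} [Fintype T] [Fintype D] {clusters : Finset (Finset T)}

def edgeCoord (u v : T ⊕ D) : ((T ⊕ D) → (T ⊕ D) → ℝ) × (T → ℝ) →ₗ[ℝ] ℝ :=
  LinearMap.proj v ∘ₗ LinearMap.proj u ∘ₗ LinearMap.fst ℝ _ _

lemma dimOf_eq_finrank_vectorSpan (s : Set (((T ⊕ D) → (T ⊕ D) → ℝ) × (T → ℝ))) :
    dimOf s = finrank ℝ (vectorSpan ℝ s) := by
  rw [dimOf, direction_affineSpan]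

lemma incVec_mem_PF (sol : GMDTSPSol T D clusters) : incVec sol ∈ PF T D clusters ∅ :=
  subset_convexHull ℝ _ ⟨sol, by simp, rfl⟩

lemma le_of_mem_PF {g : ((T ⊕ D) → (T ⊕ D) → ℝ) × (T → ℝ) →ₗ[ℝ] ℝ} {c : ℝ}
    (hg : ∀ sol : GMDTSPSol T D clusters, g (incVec sol) ≤ c) {F : Finset T}
    {p : ((T ⊕ D) → (T ⊕ D) → ℝ) × (T → ℝ)} (hp : p ∈ PF T D clusters F) :
    g p ≤ c :=
  convexHull_min (by rintro _ ⟨sol, -, rfl⟩; exact hg sol) (convex_halfSpace_le g.isLinear c) hp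

lemma edge_eq_zero_of_mem_PF_of_depot_edge_eq_two {F : Finset T}
    {p : ((T ⊕ D) → (T ⊕ D) → ℝ) × (T → ℝ)} (hp : p ∈ PF T D clusters F)
    {d : D} {i : T} (hdi : p.1 (.inr d) (.inl i) = 2) {v : T ⊕ D} (hv : v ≠ .inr d) :
    p.1 (.inl i) v = 0 := by
  have hle : p.1 (.inl i) v + p.1 (.inr d) (.inl i) ≤ 2 :=
    le_of_mem_PF (g := edgeCoord (.inl i) v + edgeCoord (.inr d) (.inl i)) (fun sol ↦ by
      simp only [LinearMap.add_apply, edgeCoord, incVec, LinearMap.coe_comp, Function.comp_apply,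
        LinearMap.fst_apply, LinearMap.proj_apply, sol.symm (.inr d)]
      exact_mod_cast sol.x_add_x_le_two i hv) hp
  have hge : -p.1 (.inl i) v ≤ 0 :=
    le_of_mem_PF (g := -edgeCoord (.inl i) v) (fun sol ↦ by simp [edgeCoord, incVec]) hp
  linarith

end Polytope

section Dimension

variable {K V W : Type*} [Field K] [AddCommGroup V] [Module K V] [AddCommGroup W] [Module K W]

lemma finrank_vectorSpan_add_finrank_le [FiniteDimensional K V] {s t : Set V} (hst : s ⊆ t)
    (f : V →ₗ[K] W)
    (hf : ∀ p ∈ s, ∀ q ∈ s, f p = f q) (htop : (vectorSpan K t).map f = ⊤) :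
    finrank K (vectorSpan K s) + finrank K W ≤ finrank K (vectorSpan K t) := by
  set U := vectorSpan K t
  have hsU : vectorSpan K s ≤ U ⊓ LinearMap.ker f := by
    refine le_inf (vectorSpan_mono K hst) ?_
    rw [vectorSpan_def, Submodule.span_le]
    rintro _ ⟨p, hp, q, hq, rfl⟩
    simp [hf p hp q hq]
  have hrn := (f.domRestrict U).finrank_range_add_finrank_ker
  rw [LinearMap.range_domRestrict, htop, finrank_top, LinearMap.ker_domRestrict,
    ← Submodule.finrank_map_subtype_eq, Submodule.map_comap_subtype] at hrn
  have := Submodule.finrank_mono hsU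
  omega

lemma map_vectorSpan_eq_top {t : Set V} (f : V →ₗ[K] K × K) {p q r : V} (hp : p ∈ t)
    (hq : q ∈ t) (hr : r ∈ t) (hfp : f p = (1, 1)) (hfq : f q = (0, 1)) (hfr : f r = (1, 0)) :
    (vectorSpan K t).map f = ⊤ := by
  refine Submodule.eq_top_iff'.2 fun w ↦ ?_
  have hw : w = w.1 • f (p -ᵥ q) + w.2 • f (p -ᵥ r) := by
    simp [vsub_eq_sub, hfp, hfq, hfr]
  rw [hw]
  exact add_mem (Submodule.smul_mem _ _ (Submodule.mem_map_of_mem (vsub_mem_vectorSpan K hp hq)))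
    (Submodule.smul_mem _ _ (Submodule.mem_map_of_mem (vsub_mem_vectorSpan K hp hr)))

end Dimension

open GMDTSPSol in
theorem depot_edge_upper_bound_not_facet_general {T D : Type*} [Fintype T]
    [Fintype D] (clusters : Finset (Finset T))
    (hnonempty : ∀ C ∈ clusters, C.Nonempty)
    (hn : 3 ≤ Fintype.card T)
    (d : D) (i : T) :
    ¬ IsFacetLe (fun p => p.1 (Sum.inr d) (Sum.inl i)) 2 (PF T D clusters ∅) ∧
      dimOf {p ∈ PF T D clusters ∅ | p.1 (Sum.inr d) (Sum.inl i) = 2} + 2 ≤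
        dimOf (PF T D clusters ∅) := by
  classical
  obtain ⟨a, ha, b, hb, hab⟩ := one_lt_card.1 (show 1 < #(univ.erase i) by
    rw [card_erase_of_mem (mem_univ i), card_univ]; omega)
  have hai := ne_of_mem_erase ha
  have hbi := ne_of_mem_erase hb
  -- the tours d → i → a → b, d → i → b → a and d → a → i → b
  obtain ⟨solA, hiaA, -, hibA⟩ := exists_tour_with_path hnonempty d hai.symm hbi.symm hab
  obtain ⟨solB, hibB, -, hiaB⟩ := exists_tour_with_path hnonempty d hbi.symm hai.symm hab.symm
  obtain ⟨solC, haiC, hibC, -⟩ := exists_tour_with_path hnonempty d hai hab hbi.symm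
  let f := (edgeCoord (.inl i) (.inl a)).prod (edgeCoord (D := D) (.inl i) (.inl b))
  have hface : ∀ p ∈ {p ∈ PF T D clusters ∅ | p.1 (.inr d) (.inl i) = 2}, f p = 0 := by
    rintro p ⟨hp, hdi⟩
    simp [f, edgeCoord, edge_eq_zero_of_mem_PF_of_depot_edge_eq_two hp hdi]
  have hcodim : dimOf {p ∈ PF T D clusters ∅ | p.1 (.inr d) (.inl i) = 2} + 2 ≤
      dimOf (PF T D clusters ∅) := by
    simpa only [dimOf_eq_finrank_vectorSpan, finrank_prod, finrank_self] using
      finrank_vectorSpan_add_finrank_le (Set.sep_subset _ _) f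
        (fun p hp q hq ↦ (hface p hp).trans (hface q hq).symm)
        (map_vectorSpan_eq_top f (incVec_mem_PF solC) (incVec_mem_PF solB) (incVec_mem_PF solA)
          (by simp [f, edgeCoord, incVec, solC.symm (.inl i) (.inl a), haiC, hibC])
          (by simp [f, edgeCoord, incVec, hiaB, hibB])
          (by simp [f, edgeCoord, incVec, hiaA, hibA]))
  exact ⟨fun ⟨_, hfacet⟩ ↦ by beta_reduce at hfacet; omega, hcodim⟩

/-- For any depot `d` and target `i`, the inequality
`x_{di} ≤ 2` does not define a facet of the GMDTSP polytope `P`: the face it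
induces (forcing the degenerate two-edge cycle `d–i–d`) has codimension at
least `2` in `P`. -/
theorem depot_edge_upper_bound_not_facet {T D : Type*} [Fintype T]
    [DecidableEq T] [Fintype D] [Nonempty D] (clusters : Finset (Finset T))
    (hcover : ∀ t : T, ∃ C ∈ clusters, t ∈ C)
    (hdisj : ∀ C ∈ clusters, ∀ C' ∈ clusters, C ≠ C' → Disjoint C C')
    (hnonempty : ∀ C ∈ clusters, C.Nonempty)
    (hn : 3 ≤ Fintype.card T)
    (d : D) (i : T) :
    ¬ IsFacetLe (fun p => p.1 (Sum.inr d) (Sum.inl i)) 2 (PF T D clusters ∅) ∧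
      dimOf {p ∈ PF T D clusters ∅ | p.1 (Sum.inr d) (Sum.inl i) = 2} + 2 ≤
        dimOf (PF T D clusters ∅) :=
  depot_edge_upper_bound_not_facet_general clusters hnonempty hn d i
end
end
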